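/- Let Y be a complete length space, p ∈ Y, and 0 < δ' < δ. If π₁(Y,δ,p) ≠ π₁(Y,δ',p), then there exist a rectifiable loop β in Y of length strictly less than 2δ and a path α from p to β(0) such that the homotopy class of α⁻¹·β·α lies in π₁(Y,δ,p) but does not lie in π₁(Y,δ',p). -/

import Mathlib

/- Common definitions: path length, length/geodesic spaces, δ-covering groups,
   covering spectra, cut-off covering groups and spectra, free homotopy,
   loops-to-infinity. -/

open Metric Filter
open scoped NNReal ENNReal unitInterval

attribute [local instance] Path.Homotopic.setoid

/-- The length (total variation) of a path in a metric space. -/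
noncomputable def pathLength {X : Type*} [MetricSpace X] {x y : X} (γ : Path x y) : ℝ≥0∞ :=
  eVariationOn γ Set.univ

/-- A metric space is a length space if the distance between any two points is the
infimum of the lengths of paths joining them. -/
def IsLengthSpace (X : Type*) [MetricSpace X] : Prop :=
  ∀ x y : X, ENNReal.ofReal (dist x y) = ⨅ γ : Path x y, pathLength γ

/-- A metric space is a geodesic space if any two points are joined by a
distance-realizing path. -/
def IsGeodesicSpace (X : Type*) [MetricSpace X] : Prop :=
  ∀ x y : X, ∃ γ : Path x y, pathLength γ = ENNReal.ofReal (dist x y)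

/-- The element of the fundamental group at `p` represented by the loop
`α⁻¹ · β · α` (i.e. follow `α` from `p` to `y`, the loop `β` at `y`, then `α` back). -/
noncomputable def loopClass {X : Type*} [TopologicalSpace X] {p y : X}
    (α : Path p y) (β : Path y y) : FundamentalGroup X p :=
  FundamentalGroup.fromPath (X := TopCat.of X) ⟦(α.trans β).trans α.symm⟧

/-- The δ-covering group `π₁(X, δ, p)`: the normal subgroup of `π₁(X,p)` generated by
classes of loops `α⁻¹·β·α` with `β` lying in some open ball of radius `δ`. -/
noncomputable def coveringGroup (X : Type*) [MetricSpace X] (p : X) (δ : ℝ) :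
    Subgroup (FundamentalGroup X p) :=
  Subgroup.normalClosure
    {g | ∃ (y : X) (β : Path y y) (α : Path p y),
      (∃ c : X, ∀ t, β t ∈ Metric.ball c δ) ∧ g = loopClass α β}

/-- The covering spectrum of `X` (with basepoint `p`). -/
def covSpec (X : Type*) [MetricSpace X] (p : X) : Set ℝ :=
  {δ | 0 < δ ∧ ∀ δ' > δ, coveringGroup X p δ' ≠ coveringGroup X p δ}

/-- The `R` cut-off δ-covering group `π₁^{cut}(X, δ, R, x)`: the normal subgroup of
`π₁(X,x)` generated by classes of loops `α⁻¹·β·α` with `β` lying in some open ball of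
radius `δ` or in the complement of the closed ball `B̄(x,R)`. -/
noncomputable def cutCoveringGroup (X : Type*) [MetricSpace X] (x : X) (δ R : ℝ) :
    Subgroup (FundamentalGroup X x) :=
  Subgroup.normalClosure
    {g | ∃ (y : X) (β : Path y y) (α : Path x y),
      ((∃ c : X, ∀ t, β t ∈ Metric.ball c δ) ∨ (∀ t, β t ∉ Metric.closedBall x R)) ∧
      g = loopClass α β}

/-- The `R` cut-off covering spectrum of `(X,x)`. -/
def cutCovSpec (X : Type*) [MetricSpace X] (x : X) (R : ℝ) : Set ℝ :=
  {δ | 0 < δ ∧ ∀ δ' > δ, cutCoveringGroup X x δ' R ≠ cutCoveringGroup X x δ R}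

/-- Two loops are freely homotopic: there is a homotopy through (not necessarily
based) loops from one to the other. -/
def FreelyHomotopic {X : Type*} [TopologicalSpace X] {a b : X}
    (γ₀ : Path a a) (γ₁ : Path b b) : Prop :=
  ∃ H : C(I × I, X),
    (∀ t, H (0, t) = γ₀ t) ∧ (∀ t, H (1, t) = γ₁ t) ∧ ∀ s, H (s, 0) = H (s, 1)

/-- Two loops are freely homotopic within a subset `A`: the homotopy stays in `A`. -/
def FreelyHomotopicIn {X : Type*} [TopologicalSpace X] (A : Set X) {a b : X}
    (γ₀ : Path a a) (γ₁ : Path b b) : Prop :=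
  ∃ H : C(I × I, X),
    (∀ t, H (0, t) = γ₀ t) ∧ (∀ t, H (1, t) = γ₁ t) ∧ (∀ s, H (s, 0) = H (s, 1)) ∧
    ∀ p, H p ∈ A

/-- A loop has the loops-to-infinity property: for every compact set it is freely
homotopic to a loop outside that set. -/
def LoopToInfinity {X : Type*} [TopologicalSpace X] {a : X} (γ : Path a a) : Prop :=
  ∀ K : Set X, IsCompact K →
    ∃ (b : X) (η : Path b b), (∀ t, η t ∉ K) ∧ FreelyHomotopic γ η

/-- A space has the loops-to-infinity property if all of its loops do. -/
def LoopsToInfinity (X : Type*) [TopologicalSpace X] : Prop :=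
  ∀ (a : X) (γ : Path a a), LoopToInfinity γ

/-- Concatenation of a finite list of loops based at `q`. -/
noncomputable def loopConcat {X : Type*} [TopologicalSpace X] (q : X) :
    List (Path q q) → Path q q
  | [] => Path.refl q
  | γ :: rest => γ.trans (loopConcat q rest)

/-- A space is semilocally simply connected if every point has a neighborhood in which
every loop is null-homotopic in the whole space. -/
def SemilocallySimplyConnected (X : Type*) [TopologicalSpace X] : Prop :=
  ∀ x : X, ∃ U ∈ nhds x, ∀ (y : X) (γ : Path y y), (∀ t, γ t ∈ U) →
    γ.Homotopic (Path.refl y)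

/-- A pointed ε-Hausdorff approximation. -/
def IsPointedHausdorffApprox {Z₁ Z₂ : Type*} [MetricSpace Z₁] [MetricSpace Z₂]
    (f : Z₁ → Z₂) (p₁ : Z₁) (p₂ : Z₂) (ε : ℝ) : Prop :=
  f p₁ = p₂ ∧ (∀ a b : Z₁, |dist (f a) (f b) - dist a b| < ε) ∧
    ∀ z : Z₂, ∃ a : Z₁, dist z (f a) ≤ ε

instance coveringGroup_normal (X : Type*) [MetricSpace X] (p : X) (δ : ℝ) :
    (coveringGroup X p δ).Normal :=
  Subgroup.normalClosure_normal

instance cutCoveringGroup_normal (X : Type*) [MetricSpace X] (x : X) (δ R : ℝ) :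
    (cutCoveringGroup X x δ R).Normal :=
  Subgroup.normalClosure_normal

/-! Argue by contradiction: assume that every loop `α⁻¹·β·α` with `β` of length `< 2δ` lies in
`π₁(Y,δ',p)`, and let `β` lie in a ball `B(c,δ)`. By compactness `β` lies in some `B(c,m)` with
`m < δ`; join `c` to every point `z` of `B(c,m)` by a spoke `γ z` of length `< m`.
If `u` is an arc of `β` from `a` to `b` inside `B(a,ε)`, with `ε ≤ min δ' (δ - m)`, and `g` is a
path from `a` to `b` of length `< ε`, then the loop `γ a · u · (γ b)⁻¹` is the product of the loop
`γ a · g · (γ b)⁻¹`, of length `< 2δ`, and a conjugate of the `δ'`-small loop `u · g⁻¹`.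
So the class of `γ (β 0) · β|[0,t] · (γ (β t))⁻¹` modulo `π₁(Y,δ',p)` is locally constant in `t`;
it is trivial at `t = 0`, and at `t = 1` it is the class of `β`. -/

open Set Topology unitInterval

section PathLength

variable {X : Type*} [MetricSpace X] {x y z : X}

lemma pathLength_symm (γ : Path x y) : pathLength γ.symm = pathLength γ := by
  have hanti : AntitoneOn σ (univ : Set I) := fun a _ b _ hab => symm_le_symm.2 hab
  rw [pathLength, pathLength, show ⇑γ.symm = γ ∘ σ from rfl,
    eVariationOn.comp_eq_of_antitoneOn _ _ hanti, image_univ, symm_bijective.surjective.range_eq]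

lemma pathLength_eq_add (γ : Path x y) (t : I) :
    pathLength γ = eVariationOn γ (Icc 0 t) + eVariationOn γ (Icc t 1) := by
  have h := eVariationOn.Icc_add_Icc γ nonneg' le_one' (mem_univ t)
  rwa [univ_inter, univ_inter, univ_inter,
    show Icc (0 : I) 1 = univ from eq_univ_of_forall fun s => ⟨s.2.1, s.2.2⟩, eq_comm] at h

lemma edist_add_edist_le_pathLength (γ : Path x y) (t : I) :
    edist x (γ t) + edist (γ t) y ≤ pathLength γ := by
  rw [pathLength_eq_add γ t]
  gcongr
  · simpa using eVariationOn.edist_le γ (left_mem_Icc.2 nonneg') (right_mem_Icc.2 nonneg')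
  · simpa using eVariationOn.edist_le γ (left_mem_Icc.2 le_one') (right_mem_Icc.2 le_one')

lemma edist_le_pathLength (γ : Path x y) (t : I) : edist x (γ t) ≤ pathLength γ :=
  le_self_add.trans (edist_add_edist_le_pathLength γ t)

lemma eVariationOn_extend_comp_le (γ : Path x y) {f : I → ℝ} (hf : Monotone f) (s : Set I) :
    eVariationOn (γ.extend ∘ f) s ≤ pathLength γ :=
  eVariationOn.comp_le_of_monotoneOn γ (projIcc 0 1 zero_le_one ∘ f)
    (((monotone_projIcc zero_le_one).comp hf).monotoneOn _) (mapsTo_univ _ _)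

lemma pathLength_trans_le (γ : Path x y) (γ' : Path y z) :
    pathLength (γ.trans γ') ≤ pathLength γ + pathLength γ' := by
  let half : I := ⟨1 / 2, by norm_num, by norm_num⟩
  rw [pathLength_eq_add _ half]
  gcongr
  · rw [eVariationOn.eq_of_eqOn (f' := γ.extend ∘ fun t : I => 2 * (t : ℝ)) fun t ht =>
      (Path.extend_extends' _ t).symm.trans (Path.extend_trans_of_le_half _ _ ht.2)]
    exact eVariationOn_extend_comp_le γ (fun _ _ hab => by linarith [Subtype.coe_le_coe.2 hab]) _
  · rw [eVariationOn.eq_of_eqOn (f' := γ'.extend ∘ fun t : I => 2 * (t : ℝ) - 1) fun t ht =>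
      (Path.extend_extends' _ t).symm.trans (Path.extend_trans_of_half_le _ _ ht.1)]
    exact eVariationOn_extend_comp_le γ' (fun _ _ hab => by linarith [Subtype.coe_le_coe.2 hab]) _

lemma range_subset_ball_of_pathLength_lt {r : ℝ} (η : Path x x)
    (h : pathLength η < ENNReal.ofReal (2 * r)) : range η ⊆ ball x r := by
  rintro _ ⟨t, rfl⟩
  have := (edist_add_edist_le_pathLength η t).trans_lt h
  rw [edist_comm (η t) x, ← two_mul, ENNReal.ofReal_mul zero_le_two, ENNReal.ofReal_ofNat,
    ENNReal.mul_lt_mul_iff_right two_ne_zero ENNReal.ofNat_ne_top] at this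
  rw [mem_ball, dist_comm, ← edist_lt_ofReal]
  exact this

lemma IsCompact.exists_lt_subset_ball {s : Set X} (hs : IsCompact s) {r : ℝ}
    (h : s ⊆ ball x r) : ∃ r' < r, s ⊆ ball x r' := by
  rcases s.eq_empty_or_nonempty with rfl | hne
  · exact ⟨r - 1, by linarith, empty_subset _⟩
  obtain ⟨z, hz, hmax⟩ := hs.exists_isMaxOn hne (continuous_id.dist continuous_const).continuousOn
  have hzr : dist z x < r := h hz
  refine ⟨(dist z x + r) / 2, by linarith, fun w hw => ?_⟩
  have : dist w x ≤ dist z x := hmax hw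
  rw [mem_ball]
  linarith

lemma IsLengthSpace.exists_pathLength_lt (hX : IsLengthSpace X) {a b : X} {r : ℝ}
    (h : dist a b < r) : ∃ γ : Path a b, pathLength γ < ENNReal.ofReal r :=
  iInf_lt_iff.1 <| by
    rw [← hX]
    exact (ENNReal.ofReal_lt_ofReal_iff_of_nonneg dist_nonneg).2 h

lemma IsLengthSpace.exists_spokes (hX : IsLengthSpace X) (c : X) (r : ℝ) :
    ∃ γ : ∀ z, Path c z, ∀ z ∈ ball c r, pathLength (γ z) < ENNReal.ofReal r := by
  have (z : X) : ∃ γ : Path c z, z ∈ ball c r → pathLength γ < ENNReal.ofReal r := by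
    by_cases h : z ∈ ball c r
    · exact (hX.exists_pathLength_lt (mem_ball'.1 h)).imp fun _ hγ _ => hγ
    · obtain ⟨γ, -⟩ := hX.exists_pathLength_lt (lt_add_one (dist c z))
      exact ⟨γ, fun h' => absurd h' h⟩
  choose γ hγ using this
  exact ⟨γ, hγ⟩

end PathLength

namespace Path.Homotopic.Quotient

variable {X : Type*} [TopologicalSpace X] {x y z : X}

@[simp]
theorem trans_symm_trans (γ : Path.Homotopic.Quotient x y) (η : Path.Homotopic.Quotient x z) :
    γ.trans (γ.symm.trans η) = η := by
  rw [← trans_assoc, trans_symm, refl_trans]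

@[simp]
theorem symm_trans_trans (γ : Path.Homotopic.Quotient x y) (η : Path.Homotopic.Quotient y z) :
    γ.symm.trans (γ.trans η) = η := by
  rw [← trans_assoc, symm_trans, refl_trans]

end Path.Homotopic.Quotient

theorem Subgroup.mem_iff_mem_of_eventually_mul_inv_mem {X G : Type*} [TopologicalSpace X]
    [PreconnectedSpace X] [Group G] (H : Subgroup G) {f : X → G}
    (hf : ∀ x, ∀ᶠ y in 𝓝 x, f y * (f x)⁻¹ ∈ H) (x y : X) : f x ∈ H ↔ f y ∈ H := by
  have hloc : IsLocallyConstant fun x => f x ∈ H :=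
    (IsLocallyConstant.iff_eventually_eq _).2 fun x => (hf x).mono fun y hy =>
      propext <| by simpa using H.mul_mem_cancel_left hy (y := f x)
  exact (hloc.apply_eq_of_preconnectedSpace x y).to_iff

section Spokes

open Path.Homotopic.Quotient

variable {X : Type*} [TopologicalSpace X] {p c : X}

lemma loopClass_eq_mk {y : X} (α : Path p y) (β : Path y y) :
    loopClass α β = mk ((α.trans β).trans α.symm) := rfl

noncomputable def spokedClass (A : Path p c) (γ : ∀ z, Path c z) {a b : X} (u : Path a b) :
    FundamentalGroup X p :=
  loopClass A (((γ a).trans u).trans (γ b).symm)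

variable (A : Path p c) (γ : ∀ z, Path c z)

lemma spokedClass_trans {a b d : X} (u : Path a b) (v : Path b d) :
    spokedClass A γ (u.trans v) = spokedClass A γ v * spokedClass A γ u := by
  simp [spokedClass, loopClass_eq_mk, FundamentalGroup.mul_def, mk_trans, mk_symm]

lemma spokedClass_refl (a : X) : spokedClass A γ (Path.refl a) = 1 := by
  rw [FundamentalGroup.one_def]
  simp [spokedClass, loopClass_eq_mk, mk_trans, mk_symm, mk_refl]

lemma spokedClass_cast {a b a' b' : X} (u : Path a b) (ha : a' = a) (hb : b' = b) :
    spokedClass A γ (u.cast ha hb) = spokedClass A γ u := by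
  subst ha hb
  rfl

lemma spokedClass_congr {a b : X} {u v : Path a b} (h : u.Homotopic v) :
    spokedClass A γ u = spokedClass A γ v := by
  simp only [spokedClass, loopClass_eq_mk, mk_trans, (eq (p := u) (q := v)).2 h]

lemma spokedClass_subpath {a b : X} (β : Path a b) (t₀ t₁ t₂ : I) :
    spokedClass A γ (β.subpath t₀ t₂) =
      spokedClass A γ (β.subpath t₁ t₂) * spokedClass A γ (β.subpath t₀ t₁) := by
  rw [← spokedClass_trans]
  exact spokedClass_congr A γ ⟨(Path.Homotopy.subpathTransSubpath β t₀ t₁ t₂).symm⟩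

lemma spokedClass_eq_mul_loopClass {a b : X} (u g : Path a b) :
    spokedClass A γ u = spokedClass A γ g * loopClass (A.trans (γ a)) (u.trans g.symm) := by
  simp [spokedClass, loopClass_eq_mk, FundamentalGroup.mul_def, mk_trans, mk_symm]

lemma spokedClass_of_loop {y : X} (α : Path p y) (β : Path y y) :
    spokedClass (α.trans (γ y).symm) γ β = loopClass α β := by
  simp [spokedClass, loopClass_eq_mk, mk_trans, mk_symm]

end Spokes

section CoveringGroup

variable {X : Type*} [MetricSpace X] {p : X}

lemma coveringGroup_le_iff {δ : ℝ} {H : Subgroup (FundamentalGroup X p)} [H.Normal] :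
    coveringGroup X p δ ≤ H ↔ ∀ (y : X) (β : Path y y) (α : Path p y) (c : X),
      range β ⊆ ball c δ → loopClass α β ∈ H := by
  rw [coveringGroup, ← Subgroup.normalClosure_subset_iff]
  constructor
  · exact fun h y β α c hβ => h ⟨y, β, α, ⟨c, fun t => hβ ⟨t, rfl⟩⟩, rfl⟩
  · rintro h _ ⟨y, β, α, ⟨c, hc⟩, rfl⟩
    exact h y β α c (range_subset_iff.2 hc)

lemma loopClass_mem_coveringGroup {δ : ℝ} {y c : X} (α : Path p y) {β : Path y y}
    (hβ : range β ⊆ ball c δ) : loopClass α β ∈ coveringGroup X p δ :=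
  coveringGroup_le_iff.1 le_rfl y β α c hβ

lemma coveringGroup_mono {δ δ' : ℝ} (h : δ' ≤ δ) :
    coveringGroup X p δ' ≤ coveringGroup X p δ :=
  coveringGroup_le_iff.2 fun _ _ α _ hβ =>
    loopClass_mem_coveringGroup α (hβ.trans (ball_subset_ball h))

end CoveringGroup

section LengthSpace

variable {Y : Type*} [MetricSpace Y] {p : Y} (H : Subgroup (FundamentalGroup Y p)) {ε : ℝ}
  {L : ℝ≥0∞}

lemma spokedClass_mem_of_range_subset_ball (hY : IsLengthSpace Y)
    (hsmall : ∀ (z : Y) (η : Path z z) (w : Path p z), range η ⊆ ball z ε → loopClass w η ∈ H)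
    (hshort : ∀ (z : Y) (η : Path z z) (w : Path p z), pathLength η < L → loopClass w η ∈ H)
    {c : Y} (A : Path p c) (γ : ∀ z, Path c z) {a b : Y} (u : Path a b)
    (hu : range u ⊆ ball a ε) (hL : pathLength (γ a) + ENNReal.ofReal ε + pathLength (γ b) < L) :
    spokedClass A γ u ∈ H := by
  have hab : dist a b < ε := by
    simpa [dist_comm] using hu ⟨1, u.target⟩
  obtain ⟨g, hg⟩ := hY.exists_pathLength_lt hab
  have hg_ball : range g ⊆ ball a ε := by
    rintro _ ⟨t, rfl⟩
    rw [mem_ball, dist_comm, ← edist_lt_ofReal]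
    exact (edist_le_pathLength g t).trans_lt hg
  rw [spokedClass_eq_mul_loopClass A γ u g]
  refine mul_mem (hshort c _ A ?_) (hsmall a _ _ ?_)
  · calc pathLength (((γ a).trans g).trans (γ b).symm)
        ≤ pathLength (γ a) + pathLength g + pathLength (γ b) := by
          grw [pathLength_trans_le, pathLength_trans_le, pathLength_symm]
      _ ≤ pathLength (γ a) + ENNReal.ofReal ε + pathLength (γ b) := by gcongr
      _ < L := hL
  · rw [Path.trans_range, Path.symm_range]
    exact union_subset hu hg_ball

lemma eventually_spokedClass_subpath_mem (hY : IsLengthSpace Y) (hε : 0 < ε)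
    (hsmall : ∀ (z : Y) (η : Path z z) (w : Path p z), range η ⊆ ball z ε → loopClass w η ∈ H)
    (hshort : ∀ (z : Y) (η : Path z z) (w : Path p z), pathLength η < L → loopClass w η ∈ H)
    {c : Y} (A : Path p c) (γ : ∀ z, Path c z) {x y : Y} (β : Path x y) {m : ℝ}
    (hγ : ∀ t, pathLength (γ (β t)) < ENNReal.ofReal m)
    (hL : ENNReal.ofReal m + ENNReal.ofReal ε + ENNReal.ofReal m ≤ L) (t : I) :
    ∀ᶠ s in 𝓝 t, spokedClass A γ (β.subpath t s) ∈ H := by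
  have hU : β ⁻¹' ball (β t) ε ∈ 𝓝 t :=
    β.continuous.continuousAt.preimage_mem_nhds (ball_mem_nhds _ hε)
  filter_upwards [(tendsto_const_nhds.uIcc tendsto_id).eventually
    (eventually_smallSets_subset.2 hU)] with s hs
  refine spokedClass_mem_of_range_subset_ball H hY hsmall hshort A γ _
    (by rw [Path.range_subpath]; exact image_subset_iff.2 hs) (lt_of_lt_of_le ?_ hL)
  exact ENNReal.add_lt_add (ENNReal.add_lt_add_right ENNReal.ofReal_ne_top (hγ t)) (hγ s)

theorem loopClass_mem_of_range_subset_ball (hY : IsLengthSpace Y) (hε : 0 < ε) {δ : ℝ}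
    (hsmall : ∀ (z : Y) (η : Path z z) (w : Path p z), range η ⊆ ball z ε → loopClass w η ∈ H)
    (hshort : ∀ (z : Y) (η : Path z z) (w : Path p z),
      pathLength η < ENNReal.ofReal (2 * δ) → loopClass w η ∈ H)
    {y c : Y} (α : Path p y) (β : Path y y) (hβ : range β ⊆ ball c δ) : loopClass α β ∈ H := by
  obtain ⟨m, hmδ, hβm⟩ := (isCompact_range β.continuous).exists_lt_subset_ball hβ
  have hm : 0 < m := pos_of_mem_ball (hβm ⟨0, rfl⟩)
  obtain ⟨γ, hγ⟩ := hY.exists_spokes c m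
  set ε' := min ε (δ - m)
  have hε' : 0 < ε' := lt_min hε (sub_pos.2 hmδ)
  have hL : ENNReal.ofReal m + ENNReal.ofReal ε' + ENNReal.ofReal m ≤ ENNReal.ofReal (2 * δ) := by
    rw [← ENNReal.ofReal_add hm.le hε'.le, ← ENNReal.ofReal_add (by positivity) hm.le]
    exact ENNReal.ofReal_le_ofReal (by linarith [min_le_right ε (δ - m)])
  have hsmall' (z : Y) (η : Path z z) (w : Path p z) (hη : range η ⊆ ball z ε') :
      loopClass w η ∈ H :=
    hsmall z η w (hη.trans (ball_subset_ball (min_le_left _ _)))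
  let f (t : I) := spokedClass (α.trans (γ y).symm) γ (β.subpath 0 t)
  have hf (t : I) : ∀ᶠ s in 𝓝 t, f s * (f t)⁻¹ ∈ H := by
    filter_upwards [eventually_spokedClass_subpath_mem H hY hε' hsmall' hshort
      (α.trans (γ y).symm) γ β (fun t => hγ _ (hβm ⟨t, rfl⟩)) hL t] with s hs
    dsimp only [f]
    rwa [spokedClass_subpath _ γ β 0 t s, mul_inv_cancel_right]
  have h0 : f 0 = 1 := by simp only [f, Path.subpath_self, spokedClass_refl]
  have h1 : f 1 = loopClass α β := by
    simp only [f, Path.subpath_zero_one, spokedClass_cast, spokedClass_of_loop]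
  rw [← h1, ← H.mem_iff_mem_of_eventually_mul_inv_mem hf 0 1, h0]
  exact one_mem H

end LengthSpace

theorem exists_short_loop_of_ne_coveringGroup_general
    {Y : Type*} [MetricSpace Y] (hY : IsLengthSpace Y)
    (p : Y) (δ δ' : ℝ) (hδ' : 0 < δ') (hδ : δ' < δ)
    (hne : coveringGroup Y p δ ≠ coveringGroup Y p δ') :
    ∃ (y : Y) (β : Path y y) (α : Path p y),
      pathLength β < ENNReal.ofReal (2 * δ) ∧
      loopClass α β ∈ coveringGroup Y p δ ∧
      loopClass α β ∉ coveringGroup Y p δ' := by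
  have hle : coveringGroup Y p δ' ≤ coveringGroup Y p δ := coveringGroup_mono hδ.le
  obtain ⟨y, β, α, c, hβ, hnot⟩ : ∃ (y : Y) (β : Path y y) (α : Path p y) (c : Y),
      range β ⊆ ball c δ ∧ loopClass α β ∉ coveringGroup Y p δ' := by
    have : ¬coveringGroup Y p δ ≤ coveringGroup Y p δ' := fun h => hne (le_antisymm h hle)
    simpa [coveringGroup_le_iff] using this
  by_contra! hshort
  refine hnot (loopClass_mem_of_range_subset_ball _ hY hδ' (fun z η w hη => ?_)
    (fun z η w hη => ?_) α β hβ)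
  · exact loopClass_mem_coveringGroup w hη
  · exact hshort z η w hη
      (loopClass_mem_coveringGroup w (range_subset_ball_of_pathLength_lt η hη))

/-- In a complete length space, if `π₁(Y,δ,p) ≠ π₁(Y,δ',p)` for
`0 < δ' < δ`, then there are a rectifiable loop `β` of length `< 2δ` and a path `α`
from `p` to its basepoint so that the class of `α⁻¹·β·α` lies in `π₁(Y,δ,p)` but not
in `π₁(Y,δ',p)`. -/
theorem exists_short_loop_of_ne_coveringGroup
    {Y : Type*} [MetricSpace Y] [CompleteSpace Y] (hY : IsLengthSpace Y)
    (p : Y) (δ δ' : ℝ) (hδ' : 0 < δ') (hδ : δ' < δ)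
    (hne : coveringGroup Y p δ ≠ coveringGroup Y p δ') :
    ∃ (y : Y) (β : Path y y) (α : Path p y),
      pathLength β < ENNReal.ofReal (2 * δ) ∧
      loopClass α β ∈ coveringGroup Y p δ ∧
      loopClass α β ∉ coveringGroup Y p δ' :=
  exists_short_loop_of_ne_coveringGroup_general hY p δ δ' hδ' hδ hne
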